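/- arXiv:2402.12567 — 7 statements merged into one kernel-verified Lean document; each statement's English description precedes it below -/
import Mathlib

section
/- For every positive integer n, there exists a partition of Euclidean space ℝⁿ into a set R of red points and a set B of blue points such that: (i) there are no points x, v ∈ ℝⁿ with ‖v‖ = 1 and x, x + v, x + 2v all in R (no red 1-progression of length 3); and (ii) there are no points x, v ∈ ℝⁿ with ‖v‖ = 1 and x + i·v ∈ B for all i = 0, 1, …, 1176 (no blue 1-progression of length 1177). -/
open scoped RealInnerProductSpace

private lemma exists_cross (f : ℕ → ℝ) (m : ℝ) :
    ∀ N : ℕ, f 0 < m → m ≤ f N → ∃ j : ℕ, j + 1 ≤ N ∧ f j < m ∧ m ≤ f (j + 1) := by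
  intro N
  induction N with
  | zero => exact fun h0 hN => absurd hN (not_le.mpr h0)
  | succ N ih =>
    intro h0 hN
    by_cases h : m ≤ f N
    · obtain ⟨j, hj, h1, h2⟩ := ih h0 h
      exact ⟨j, Nat.le_succ_of_le hj, h1, h2⟩
    · exact ⟨N, le_refl _, not_le.mp h, hN⟩

/-- For every positive integer `n`, there is a red/blue coloring of `ℝⁿ`
(given by the red set `R` and the blue set `Rᶜ`) with no red unit
3-progression and no blue unit 1177-progression. -/
theorem stmt_0 (n : ℕ) (hn : 0 < n) :
    ∃ R : Set (EuclideanSpace ℝ (Fin n)),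
      (¬ ∃ (x v : EuclideanSpace ℝ (Fin n)), ‖v‖ = 1 ∧
          x ∈ R ∧ x + v ∈ R ∧ x + (2 : ℝ) • v ∈ R) ∧
      (¬ ∃ (x v : EuclideanSpace ℝ (Fin n)), ‖v‖ = 1 ∧
          ∀ i : ℕ, i ≤ 1176 → x + (i : ℝ) • v ∈ Rᶜ) := by
  classical
  refine ⟨{y | ∃ m : ℤ, (m : ℝ) ≤ 1149/4600 * ‖y‖^2 ∧
      1149/4600 * ‖y‖^2 < m + 1149/4600}, ?_, ?_⟩
  · -- no red 3-progression
    rintro ⟨x, v, hv, ⟨m₁, h₁l, h₁r⟩, ⟨m₂, h₂l, h₂r⟩, ⟨m₃, h₃l, h₃r⟩⟩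
    have e1 : ‖x + v‖^2 = ‖x‖^2 + 2*⟪x, v⟫ + 1 := by
      rw [norm_add_sq_real, hv]; norm_num
    have e2 : ‖x + (2:ℝ)•v‖^2 = ‖x‖^2 + 4*⟪x, v⟫ + 4 := by
      have h2 : ‖(2:ℝ)‖ = 2 := by norm_num
      rw [norm_add_sq_real, real_inner_smul_right, norm_smul, hv, h2]
      ring
    have key1 : (2*(m₂:ℝ) - m₁) < m₃ := by linarith
    have key2 : (m₃:ℝ) < 2*(m₂:ℝ) - m₁ + 1 := by linarith
    have k1 : 2*m₂ - m₁ < m₃ := by exact_mod_cast key1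
    have k2 : m₃ < 2*m₂ - m₁ + 1 := by exact_mod_cast key2
    omega
  · -- no blue 1177-progression
    rintro ⟨x, v, hv, hblue⟩
    obtain ⟨p, hp⟩ : ∃ p : ℝ, p = ⟪x, v⟫ := ⟨_, rfl⟩
    have hD : ∀ r : ℝ, ‖x + r • v‖^2 = ‖x‖^2 + 2*p*r + r^2 := by
      intro r
      rw [norm_add_sq_real, real_inner_smul_right, norm_smul, hv, Real.norm_eq_abs,
        mul_one, sq_abs, hp]
      ring
    obtain ⟨u₀, hu₀⟩ : ∃ u₀ : ℝ, u₀ = Int.fract (1149/4600 * (4*p + 4)) := ⟨_, rfl⟩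
    obtain ⟨M₀, hM₀⟩ : ∃ M₀ : ℤ, (M₀:ℤ) = ⌊(1149/4600 : ℝ) * (4*p + 4)⌋ := ⟨_, rfl⟩
    have hMu : (M₀:ℝ) + u₀ = 1149/4600 * (4*p + 4) := by
      rw [hu₀, hM₀]; exact Int.floor_add_fract _
    have hu0_nonneg : 0 ≤ u₀ := hu₀ ▸ Int.fract_nonneg _
    have hu0_lt : u₀ < 1 := hu₀ ▸ Int.fract_lt_one _
    obtain ⟨k, hk⟩ : ∃ k : ℤ, (k:ℤ) = ⌊(1150:ℝ) * u₀ - 230⌋ := ⟨_, rfl⟩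
    have hkle : (k:ℝ) ≤ 1150 * u₀ - 230 := hk ▸ Int.floor_le _
    have hkgt : 1150 * u₀ - 230 < k + 1 := hk ▸ Int.lt_floor_add_one _
    have hk_lb : -230 ≤ k := by
      have h : (-231:ℝ) < (k:ℝ) := by linarith
      have h' : (-231:ℤ) < k := by exact_mod_cast h
      omega
    have hk_ub : k ≤ 919 := by
      have h : (k:ℝ) < 920 := by linarith
      have h' : k < (920:ℤ) := by exact_mod_cast h
      omega
    obtain ⟨i₀ℤ, hi₀ℤ⟩ : ∃ z : ℤ, z = if 0 ≤ k then k else k + 1150 := ⟨_, rfl⟩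
    have hi₀ℤ_nonneg : 0 ≤ i₀ℤ := by rw [hi₀ℤ]; split <;> omega
    have hi₀ℤ_le : i₀ℤ ≤ 1149 := by rw [hi₀ℤ]; split <;> omega
    obtain ⟨i₀, hi₀⟩ : ∃ a : ℕ, (a:ℤ) = i₀ℤ := ⟨i₀ℤ.toNat, Int.toNat_of_nonneg hi₀ℤ_nonneg⟩
    have hi₀cast : (i₀:ℝ) = (i₀ℤ:ℝ) := by exact_mod_cast congrArg (fun z : ℤ => (z : ℝ)) hi₀
    have hi₀le : i₀ ≤ 1149 := by omega
    obtain ⟨s₀, hs₀⟩ : ∃ s : ℝ, s = u₀ - k/1150 := ⟨_, rfl⟩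
    have hs₀_lb : 1/5 ≤ s₀ := by rw [hs₀]; linarith
    have hs₀_ub : s₀ < 231/1150 := by rw [hs₀]; linarith
    obtain ⟨NT, hNT⟩ : ∃ z : ℤ, z = if 0 ≤ k then M₀ + k else M₀ + k + 1149 := ⟨_, rfl⟩
    have L1 : 1149/4600 * (4*p + 4 + 4*(i₀:ℝ)) = (NT:ℝ) + s₀ := by
      rw [hs₀, hNT, hi₀cast, hi₀ℤ]
      by_cases hk0 : 0 ≤ k
      · rw [if_pos hk0, if_pos hk0]; push_cast; linarith
      · rw [if_neg hk0, if_neg hk0]; push_cast; linarith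
    obtain ⟨C, hC⟩ : ∃ C : ℝ, C = 1149/4600 * ‖x + ((i₀:ℕ):ℝ) • v‖^2 := ⟨_, rfl⟩
    have hCD : C = 1149/4600 * (‖x‖^2 + 2*p*(i₀:ℝ) + (i₀:ℝ)^2) := by rw [hC, hD]
    obtain ⟨W, hW⟩ : ∃ W : ℕ → ℝ,
        W = fun j : ℕ => C + s₀ * j - ((j:ℝ)*((j:ℝ)-1))/1150 := ⟨_, rfl⟩
    have hWj' : ∀ j : ℕ, W j = C + s₀ * j - ((j:ℝ)*((j:ℝ)-1))/1150 := by
      intro j; rw [hW]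
    have L4 : ∀ j : ℕ, 1149/4600 * ‖x + ((i₀ + 2*j : ℕ):ℝ) • v‖^2
        = W j + ((NT * j + j*(j-1) : ℤ) : ℝ) := by
      intro j
      rw [hWj' j, hD, hCD]
      push_cast
      linear_combination (j:ℝ) * L1
    obtain ⟨m, hm⟩ : ∃ m : ℤ, m = ⌊C⌋ + 1 := ⟨_, rfl⟩
    have hfloor1 : C < (m:ℝ) := by
      rw [hm]; push_cast; exact Int.lt_floor_add_one _
    have hfloor2 : (m:ℝ) ≤ C + 1 := by
      rw [hm]; push_cast; linarith [Int.floor_le C]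
    have hm1 : W 0 < (m:ℝ) := by rw [hWj' 0]; push_cast; linarith
    have hm2 : (m:ℝ) ≤ W 7 := by rw [hWj' 7]; push_cast; linarith
    obtain ⟨j, hj7, hWj, hWj1⟩ := exists_cross W (m:ℝ) 7 hm1 hm2
    have hstep : W (j+1) ≤ W j + s₀ := by
      rw [hWj' (j+1), hWj' j]
      have hj0 : (0:ℝ) ≤ (j:ℝ) := Nat.cast_nonneg _
      push_cast
      nlinarith
    have hup : W (j+1) < (m:ℝ) + 1149/4600 := by linarith
    have hile : i₀ + 2*(j+1) ≤ 1176 := by omega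
    have hmem := hblue (i₀ + 2*(j+1)) hile
    rw [Set.mem_compl_iff] at hmem
    apply hmem
    have h4 := L4 (j+1)
    refine ⟨m + NT * (j+1) + (j+1)*j, ?_, ?_⟩
    · push_cast at h4 ⊢
      linarith
    · push_cast at h4 ⊢
      linarith
end

section
/- For every positive integer n and every real α > 0 satisfying at least one of the conditions (a) α² is irrational, (b) α² = p/q with p, q positive integers and 47 does not divide q, (c) α² ≥ 2, (d) α² ≤ 1/(7·47⁴·48), there exists a partition of ℝⁿ into red and blue points such that there is no red 1-progression of length 3 (no x, v with ‖v‖ = 1 and x, x + v, x + 2v all red) and no blue α-progression of length 8649 (no x, v with ‖v‖ = α and x + i·v blue for all i = 0, …, 8648). -/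
/-!
Colour `x` red when `{‖x‖² / m} < 0.23`, for a scale `m` with `{2 / m} ∈ [0.46, 0.54]`.
Along a unit progression the second difference of `‖x‖² / m` is `2 / m`, which three fractional
parts below `0.23` cannot produce modulo `1`. Along an `α`-progression, `‖x + i v‖² / m` is a
quadratic in `i` with leading coefficient `θ = α² / m`. Each of the four hypotheses on `α²`
allows a scale for which `θ = s / 47` with `47 ∤ s`, or `θ` is of order `1 / 8648²`. In the
first regime, the spacing of the values of a quadratic modulo `47` or a slow walk along a
subprogression forces some `i ≤ 8648` into the red window; in the second, a slow quadratic walk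
along a subprogression chosen by Dirichlet approximation does.
-/

open Set

namespace ProgressionColoring

theorem exists_lt_not_and_succ_of_not_zero {p : ℕ → Prop} {T : ℕ} (h0 : ¬ p 0) (hT : p T) :
    ∃ t < T, ¬ p t ∧ p (t + 1) := by
  induction T with
  | zero => exact absurd hT h0
  | succ T ih =>
    by_cases h : p T
    · obtain ⟨t, ht, hpt⟩ := ih h
      exact ⟨t, by omega, hpt⟩
    · exact ⟨T, by omega, h, hT⟩

theorem fract_mem_Ico_of_sub_intCast_mem {x c ε : ℝ} {k : ℤ} (hc : 0 ≤ c) (hcε : c + ε ≤ 1)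
    (hx : x - k ∈ Ico c (c + ε)) : Int.fract x ∈ Ico c (c + ε) := by
  rwa [(Int.fract_eq_iff).mpr ⟨hc.trans hx.1, hx.2.trans_le hcε, k, by ring⟩]

theorem exists_fract_mem_Ico_of_abs_sub_le {x : ℕ → ℝ} {T : ℕ} {c ε : ℝ} (hc : 0 ≤ c)
    (hcε : c + ε ≤ 1) (hstep : ∀ t < T, |x (t + 1) - x t| ≤ ε) (htravel : 1 ≤ |x T - x 0|) :
    ∃ t ≤ T, Int.fract (x t) ∈ Ico c (c + ε) := by
  suffices ∃ t ≤ T, ∃ k : ℤ, x t - k ∈ Ico c (c + ε) by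
    obtain ⟨t, ht, k, hk⟩ := this
    exact ⟨t, ht, fract_mem_Ico_of_sub_intCast_mem hc hcε hk⟩
  rcases le_abs'.mp htravel with hdown | hup
  · set k := ⌊x 0 - c - ε⌋
    have h0 : k + c + ε ≤ x 0 := by linarith [Int.floor_le (x 0 - c - ε)]
    have hT : x T < k + c + ε := by linarith [Int.lt_floor_add_one (x 0 - c - ε)]
    obtain ⟨t, ht, hbefore, hafter⟩ :=
      exists_lt_not_and_succ_of_not_zero (p := fun t => x t < k + c + ε) h0.not_gt hT
    have := abs_le.mp (hstep t ht)
    exact ⟨t + 1, ht, k, by constructor <;> linarith [not_lt.mp hbefore]⟩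
  · set k := ⌊x 0 - c⌋ + 1
    have h0 : x 0 < k + c := by simp only [k]; push_cast; linarith [Int.lt_floor_add_one (x 0 - c)]
    have hT : k + c ≤ x T := by simp only [k]; push_cast; linarith [Int.floor_le (x 0 - c)]
    obtain ⟨t, ht, hbefore, hafter⟩ :=
      exists_lt_not_and_succ_of_not_zero (p := fun t => k + c ≤ x t) h0.not_ge hT
    have := abs_le.mp (hstep t ht)
    exact ⟨t + 1, ht, k, by constructor <;> linarith [not_le.mp hbefore]⟩

theorem exists_mul_sq_sub_val_lt_six :
    ∀ a t : ZMod 47, a ≠ 0 → ∃ r : ZMod 47, (a * r ^ 2 - t).val < 6 := by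
  decide

theorem exists_quadratic_sub_val_lt_six {a : ZMod 47} (ha : a ≠ 0) (b t : ZMod 47) :
    ∃ r : ZMod 47, (a * r ^ 2 + b * r - t).val < 6 := by
  have h2 : (2 : ZMod 47) ≠ 0 := by decide
  have : Fact (Nat.Prime 47) := ⟨by norm_num⟩
  set h := b / (2 * a)
  have hb : 2 * a * h = b := mul_div_cancel₀ b (mul_ne_zero h2 ha)
  obtain ⟨ρ, hρ⟩ := exists_mul_sq_sub_val_lt_six a (t + a * h ^ 2) ha
  refine ⟨ρ - h, ?_⟩
  convert hρ using 2
  rw [← hb]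
  ring

theorem exists_fract_add_quadratic_div_mem_Ico {a : ℤ} (ha : ¬ (47 : ℤ) ∣ a) (b : ℤ) (D : ℝ)
    {lo : ℝ} (hlo : 0 ≤ lo) (hhi : lo + 6 / 47 ≤ 1) :
    ∃ r : ℕ, r < 47 ∧ Int.fract (D + (a * r ^ 2 + b * r) / 47) ∈ Ico lo (lo + 6 / 47) := by
  set e : ℤ := ⌈47 * (lo - D)⌉
  have ha' : (a : ZMod 47) ≠ 0 := by
    rwa [Ne, ZMod.intCast_zmod_eq_zero_iff_dvd]
  obtain ⟨r, hr⟩ := exists_quadratic_sub_val_lt_six ha' b e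
  set u := ((a : ZMod 47) * r ^ 2 + b * r - e).val
  obtain ⟨t, ht⟩ : (47 : ℤ) ∣ a * r.val ^ 2 + b * r.val - e - u :=
    (ZMod.intCast_zmod_eq_zero_iff_dvd _ 47).mp (by simp [u])
  refine ⟨r.val, r.val_lt, fract_mem_Ico_of_sub_intCast_mem hlo hhi (k := t) ?_⟩
  have hu : (u : ℝ) ≤ 5 := by exact_mod_cast Nat.lt_succ_iff.mp hr
  have he := Int.le_ceil (47 * (lo - D))
  have he' := Int.ceil_lt_add_one (47 * (lo - D))
  have ht' : (a * r.val ^ 2 + b * r.val : ℝ) = e + u + 47 * t := by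
    exact_mod_cast (by linarith : a * r.val ^ 2 + b * r.val = e + u + 47 * t)
  rw [ht']
  constructor
  · have : (0 : ℝ) ≤ u := u.cast_nonneg
    linarith
  · linarith

def QuadraticHitsWindow (θ : ℝ) : Prop :=
  ∀ A U : ℝ, ∃ i : ℕ, i ≤ 8648 ∧ Int.fract (A + U * i + θ * i ^ 2) < 23 / 100

section DivFortySeven

variable (s : ℤ) (A U : ℝ) {h : ℕ} {c : ℤ}

/-- Along `i = 47 h t` the quadratic is `A + d t` modulo `1`, where `d = 47 h U - c`. -/
theorem exists_fract_lt_of_le_abs_mul_sub (hh : h ≤ 4) (hd : |h * (47 * U) - c| ≤ 1 / 5)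
    (hbig : 1 / 46 ≤ |h * (47 * U) - c|) :
    ∃ i : ℕ, i ≤ 8648 ∧ Int.fract (A + U * i + s / 47 * i ^ 2) < 23 / 100 := by
  set d := h * (47 * U) - c with hd_def
  obtain ⟨t, ht, hfr⟩ := exists_fract_mem_Ico_of_abs_sub_le (x := fun t : ℕ => A + d * t)
    (T := 46) (c := 0) (ε := 23 / 100) le_rfl (by norm_num)
    (fun t _ => by push_cast; ring_nf; linarith)
    (by
      rw [show A + d * ((46 : ℕ) : ℝ) - (A + d * ((0 : ℕ) : ℝ)) = 46 * d by push_cast; ring,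
        abs_mul]
      norm_num; linarith)
  refine ⟨47 * h * t, by nlinarith, ?_⟩
  have hid : A + U * ((47 * h * t : ℕ) : ℝ) + s / 47 * ((47 * h * t : ℕ) : ℝ) ^ 2
      = (A + d * t) + ((c * t + 47 * s * h ^ 2 * t ^ 2 : ℤ) : ℝ) := by
    push_cast [hd_def]; ring
  rw [hid, Int.fract_add_intCast]
  simpa using hfr.2

/-- Along `i = h r` the quadratic is `A + (s h² r² + c r) / 47` plus a drift below `1 / 46`. -/
theorem exists_fract_lt_of_abs_mul_sub_lt (hs : ¬ (47 : ℤ) ∣ s) (hh0 : 0 < h) (hh : h ≤ 4)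
    (hsmall : |h * (47 * U) - c| < 1 / 46) :
    ∃ i : ℕ, i ≤ 8648 ∧ Int.fract (A + U * i + s / 47 * i ^ 2) < 23 / 100 := by
  set d := h * (47 * U) - c with hd_def
  have hsh : ¬ (47 : ℤ) ∣ s * h ^ 2 := by
    have h47 : Prime (47 : ℤ) := Int.prime_iff_natAbs_prime.mpr (by norm_num)
    intro hdvd
    rcases h47.dvd_or_dvd hdvd with h' | h'
    · exact hs h'
    · have := Int.le_of_dvd (by positivity) (h47.dvd_of_dvd_pow h')
      omega
  obtain ⟨r, hr, hfr⟩ := exists_fract_add_quadratic_div_mem_Ico hsh c A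
    (lo := 1 / 46) (by norm_num) (by norm_num)
  refine ⟨h * r, by nlinarith, ?_⟩
  have hdr : |d * r / 47| < 1 / 46 := by
    have : (r : ℝ) ≤ 46 := by exact_mod_cast Nat.lt_succ_iff.mp hr
    rw [abs_div, abs_mul, Nat.abs_cast, abs_of_pos (by norm_num : (0 : ℝ) < 47),
      div_lt_iff₀ (by norm_num)]
    nlinarith [abs_nonneg d]
  push_cast at hfr
  set X := A + (s * h ^ 2 * r ^ 2 + c * r) / 47
  have hid : A + U * ((h * r : ℕ) : ℝ) + s / 47 * ((h * r : ℕ) : ℝ) ^ 2 = X + d * r / 47 := by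
    simp only [X, hd_def]; push_cast; ring
  rw [hid]
  have := fract_mem_Ico_of_sub_intCast_mem (x := X + d * r / 47) (k := ⌊X⌋) (c := 0)
    (ε := 23 / 100) le_rfl (by norm_num) (by
      rw [show X + d * r / 47 - ⌊X⌋ = Int.fract X + d * r / 47 by rw [Int.fract]; ring]
      have := abs_lt.mp hdr
      constructor <;> linarith [hfr.1, hfr.2])
  simpa using this.2

end DivFortySeven

theorem quadraticHitsWindow_div_47 {s : ℤ} (hs : ¬ (47 : ℤ) ∣ s) :
    QuadraticHitsWindow (s / 47) := by
  intro A U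
  obtain ⟨c, h, hh0, hh4, hd⟩ :=
    Real.exists_int_int_abs_mul_sub_le (47 * U) (n := 4) (by norm_num)
  lift h to ℕ using hh0.le
  have hh4 : h ≤ 4 := by exact_mod_cast hh4
  push_cast at hd hh0
  rcases le_or_gt (1 / 46) |h * (47 * U) - c| with hbig | hsmall
  · exact exists_fract_lt_of_le_abs_mul_sub s A U hh4 (by norm_num at hd ⊢; exact hd) hbig
  · exact exists_fract_lt_of_abs_mul_sub_lt s A U hs (by exact_mod_cast hh0) hh4 hsmall

/-- The second difference of the walk over `m` is `2 g m ^ 2 ≥ 2`, so it travels a distance `1`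
on `[0, m]` or on `[m, 2m]`, in steps below `23 / 100`. -/
theorem exists_fract_quadratic_lt {A e g : ℝ} {m : ℕ} (hm : 1 ≤ g * m ^ 2)
    (hstep : |e| + 4 * g * m ≤ 23 / 100) :
    ∃ j ≤ 2 * m, Int.fract (A + e * j + g * j ^ 2) < 23 / 100 := by
  set X : ℕ → ℝ := fun j => A + e * j + g * j ^ 2 with hX
  have hg : 0 ≤ g := by
    by_contra! hg
    nlinarith [sq_nonneg (m : ℝ)]
  have hsteps : ∀ t < 2 * m, |X (t + 1) - X t| ≤ 23 / 100 := by
    intro t ht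
    have ht' : (2 * t + 1 : ℝ) ≤ 4 * m := by exact_mod_cast (by omega : 2 * t + 1 ≤ 4 * m)
    calc |X (t + 1) - X t| = |e + g * (2 * t + 1)| := by simp only [hX]; push_cast; ring_nf
      _ ≤ |e| + g * (2 * t + 1) := by
          refine (abs_add_le _ _).trans_eq ?_
          rw [abs_of_nonneg (by positivity : (0 : ℝ) ≤ g * (2 * t + 1))]
      _ ≤ 23 / 100 := by nlinarith
  have hsecond : (X (2 * m) - X m) - (X m - X 0) = 2 * (g * m ^ 2) := by
    simp only [hX]; push_cast; ring
  rcases le_or_gt 1 |X m - X 0| with hfirst | hfirst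
  · obtain ⟨j, hj, hfr⟩ := exists_fract_mem_Ico_of_abs_sub_le (c := 0) le_rfl (by norm_num)
      (fun t ht => hsteps t (by omega)) hfirst
    exact ⟨j, by omega, by simpa using hfr.2⟩
  · have htravel : 1 ≤ |X (m + m) - X (m + 0)| := by
      rw [← two_mul, add_zero]
      have := abs_lt.mp hfirst
      rw [le_abs']
      right; linarith
    obtain ⟨j, hj, hfr⟩ := exists_fract_mem_Ico_of_abs_sub_le (x := fun t => X (m + t)) (c := 0)
      le_rfl (by norm_num) (fun t ht => hsteps (m + t) (by omega)) htravel
    exact ⟨m + j, by omega, by simpa [hX] using hfr.2⟩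

/-- By Dirichlet, `q U` is within `1 / 58` of an integer for some `q ≤ 57`; along multiples
of `q` the quadratic has a small linear part, and its leading coefficient `θ q ^ 2` is small
enough for `exists_fract_quadratic_lt` with `m ≈ 1 / (q √θ)`. -/
theorem quadraticHitsWindow_of_mem_Icc {θ : ℝ} (hθ : θ ∈ Icc (23 / 8648 ^ 2) (49 / 8648 ^ 2)) :
    QuadraticHitsWindow θ := by
  intro A U
  obtain ⟨p, q, hq0, hq57, hpq⟩ := Real.exists_int_int_abs_mul_sub_le U (n := 57) (by norm_num)
  lift q to ℕ using hq0.le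
  have hq1 : (1 : ℝ) ≤ q := by exact_mod_cast hq0
  have hq57' : (q : ℝ) ≤ 57 := by exact_mod_cast hq57
  push_cast at hpq
  set σ := √θ
  have hσlo : 47 / 10 / 8648 ≤ σ := Real.le_sqrt_of_sq_le (by nlinarith [hθ.1])
  have hσhi : σ ≤ 7 / 8648 := Real.sqrt_le_iff.mpr ⟨by norm_num, by nlinarith [hθ.2]⟩
  have hσθ : σ ^ 2 = θ := Real.sq_sqrt (by nlinarith [hθ.1])
  set ρ := q * σ
  have hρ0 : 0 < ρ := by positivity
  set m := ⌈ρ⁻¹⌉₊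
  have hm1 : 1 ≤ ρ * m :=
    calc 1 = ρ * ρ⁻¹ := (mul_inv_cancel₀ hρ0.ne').symm
      _ ≤ ρ * m := by gcongr; exact Nat.le_ceil _
  have hm2 : ρ * m < 1 + ρ := by
    have := Nat.ceil_lt_add_one (inv_nonneg.mpr hρ0.le)
    calc ρ * m < ρ * (ρ⁻¹ + 1) := mul_lt_mul_of_pos_left this hρ0
      _ = 1 + ρ := by field_simp
  have hρhi : ρ ≤ 57 * (7 / 8648) := mul_le_mul hq57' hσhi (by positivity) (by norm_num)
  have hg : θ * q ^ 2 = ρ ^ 2 := by rw [← hσθ]; ring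
  obtain ⟨j, hj, hfr⟩ := exists_fract_quadratic_lt (A := A) (e := q * U - p) (g := θ * q ^ 2)
    (m := m) (by rw [hg]; nlinarith) (by
      have : |(q : ℝ) * U - p| ≤ 1 / 58 := by norm_num at hpq ⊢; exact hpq
      rw [hg]
      nlinarith)
  have hqm : q * m ≤ 4324 := by
    have : (q * m : ℝ) ≤ 4324 := by nlinarith
    exact_mod_cast this
  refine ⟨q * j, by nlinarith, ?_⟩
  have hid : A + U * ((q * j : ℕ) : ℝ) + θ * ((q * j : ℕ) : ℝ) ^ 2
      = (A + (q * U - p) * j + θ * q ^ 2 * j ^ 2) + ((p * j : ℤ) : ℝ) := by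
    push_cast; ring
  rwa [hid, Int.fract_add_intCast]

def IsAdmissibleScale (β m : ℝ) : Prop :=
  Int.fract (2 / m) ∈ Icc (46 / 100) (54 / 100) ∧ QuadraticHitsWindow (β / m)

theorem isAdmissibleScale_of_fract_mul {β : ℝ} (hβ : 0 < β) {s : ℕ} (hs : ¬ 47 ∣ s)
    (hfr : Int.fract (s * (2 / (47 * β))) ∈ Icc (46 / 100) (54 / 100)) :
    IsAdmissibleScale β (47 * β / s) := by
  have hs0 : (0 : ℝ) < s := by
    have : s ≠ 0 := by rintro rfl; exact hs (dvd_zero 47)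
    positivity
  refine ⟨by convert hfr using 2; field_simp, ?_⟩
  have h47 : ¬ (47 : ℤ) ∣ s := by exact_mod_cast hs
  convert quadraticHitsWindow_div_47 h47 using 1
  field_simp
  simp

/-- Dirichlet puts `k (47 g)` within `1 / 13` of an integer, but not on it, so along
`s = 1 + 47 k t` the fractional parts of `s g` follow a slow nonconstant walk. -/
theorem exists_not_dvd_fract_mul_mem_of_irrational {g : ℝ} (hg : Irrational g) :
    ∃ s : ℕ, ¬ 47 ∣ s ∧ Int.fract (s * g) ∈ Icc (46 / 100) (54 / 100) := by
  obtain ⟨j, k, hk0, hk12, hjk⟩ := Real.exists_int_int_abs_mul_sub_le (47 * g) (n := 12)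
    (by norm_num)
  lift k to ℕ using hk0.le
  set η := k * (47 * g) - j
  have hη : η ≠ 0 := by
    rw [sub_ne_zero, ← mul_assoc]
    exact_mod_cast (hg.natCast_mul (m := k * 47) (by omega)).ne_int j
  obtain ⟨T, hT⟩ := exists_nat_ge (1 / |η|)
  obtain ⟨t, -, hfr⟩ := exists_fract_mem_Ico_of_abs_sub_le (x := fun t : ℕ => g + t * η) (T := T)
    (c := 46 / 100) (ε := 8 / 100) (by norm_num) (by norm_num)
    (fun t _ => by push_cast; ring_nf; norm_num at hjk; linarith)
    (by
      rw [show g + T * η - (g + (0 : ℕ) * η) = T * η by push_cast; ring, abs_mul, Nat.abs_cast]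
      rwa [div_le_iff₀ (abs_pos.mpr hη)] at hT)
  refine ⟨1 + 47 * (k * t), by omega, ?_⟩
  have hid : ((1 + 47 * (k * t) : ℕ) : ℝ) * g = (g + t * η) + ((t * j : ℤ) : ℝ) := by
    simp only [η]; push_cast; ring
  rw [hid, Int.fract_add_intCast]
  exact ⟨hfr.1, by linarith [hfr.2]⟩

theorem exists_not_dvd_fract_mul_mem_of_pos_of_le {g : ℝ} (hg0 : 0 < g) (hg : g ≤ 1 / 47) :
    ∃ s : ℕ, ¬ 47 ∣ s ∧ Int.fract (s * g) ∈ Icc (46 / 100) (54 / 100) := by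
  obtain ⟨T, hT⟩ := exists_nat_ge (1 / g)
  obtain ⟨t, -, hfr⟩ := exists_fract_mem_Ico_of_abs_sub_le (x := fun t : ℕ => t * g) (T := T)
    (c := 46 / 100) (ε := 4 / 100) (by norm_num) (by norm_num)
    (fun t _ => by push_cast; ring_nf; rw [abs_of_pos hg0]; linarith)
    (by
      rw [show T * g - (0 : ℕ) * g = T * g by push_cast; ring, abs_of_nonneg (by positivity)]
      rwa [div_le_iff₀ hg0] at hT)
  have hnext : Int.fract ((t + 1 : ℕ) * g) = Int.fract (t * g) + g := by
    rw [Int.fract_eq_iff]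
    refine ⟨by linarith [hfr.1], by linarith [hfr.2], ⌊(t : ℝ) * g⌋, ?_⟩
    push_cast; rw [Int.fract]; ring
  by_cases h47 : 47 ∣ t
  · exact ⟨t + 1, by omega, by rw [hnext]; constructor <;> linarith [hfr.1, hfr.2]⟩
  · exact ⟨t, h47, Ico_subset_Icc_self.trans (Icc_subset_Icc le_rfl (by norm_num)) hfr⟩

theorem exists_nonneg_mul_eq_gcd_mul_add {a M : ℤ} (hM : M ≠ 0) (k : ℤ) :
    ∃ s z : ℤ, 0 ≤ s ∧ s * a = a.gcd M * k + M * z := by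
  refine ⟨a.gcdA M * k % M, -(a.gcdB M * k) - a * (a.gcdA M * k / M), Int.emod_nonneg _ hM, ?_⟩
  rw [Int.emod_def]
  linear_combination (-k) * Int.gcd_eq_gcd_ab a M

/-- With `d = gcd(a, M)` and `M = d N`, the multiples of `a` modulo `M` are the multiples of `d`,
so `s a / M` can take any value `k / N` modulo `1`; as `47 ∣ N`, some such `k` in the window
is prime to `47`, and then so is `s`. -/
theorem exists_not_dvd_fract_mul_mem_of_rat {a M : ℤ} (hM : 0 < M) (h47M : 47 ∣ M)
    (h47a : ¬ 47 ∣ a) :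
    ∃ s : ℕ, ¬ 47 ∣ s ∧ Int.fract (s * (a / M : ℝ)) ∈ Icc (46 / 100) (54 / 100) := by
  have h47 : Prime (47 : ℤ) := Int.prime_iff_natAbs_prime.mpr (by norm_num)
  set d : ℤ := (a.gcd M : ℤ)
  obtain ⟨N, hN⟩ : d ∣ M := Int.gcd_dvd_right a M
  have h47d : ¬ 47 ∣ d := fun h => h47a (h.trans (Int.gcd_dvd_left a M))
  have hN0 : 0 < N := pos_of_mul_pos_right (hN ▸ hM) (Int.natCast_nonneg _)
  have h47N : 47 ≤ N := Int.le_of_dvd hN0 ((h47.dvd_or_dvd (hN ▸ h47M)).resolve_left h47d)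
  obtain ⟨k, hk47, hk1, hk2⟩ : ∃ k : ℤ, ¬ 47 ∣ k ∧ 46 * N ≤ 100 * k ∧ 100 * k ≤ 54 * N := by
    by_cases h : 47 ∣ (46 * N + 99) / 100
    · exact ⟨(46 * N + 99) / 100 + 1, by omega, by omega, by omega⟩
    · exact ⟨(46 * N + 99) / 100, h, by omega, by omega⟩
  obtain ⟨s, z, hs0, hsa⟩ : ∃ s z : ℤ, 0 ≤ s ∧ s * a = d * k + M * z :=
    exists_nonneg_mul_eq_gcd_mul_add hM.ne' k
  refine ⟨s.toNat, fun h => ?_, ?_⟩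
  · have hs47 : 47 ∣ s := by
      have := Int.natCast_dvd_natCast.mpr h
      rwa [Int.toNat_of_nonneg hs0] at this
    have h' : 47 ∣ s * a - M * z :=
      dvd_sub (dvd_mul_of_dvd_left hs47 _) (dvd_mul_of_dvd_left h47M _)
    rw [hsa, add_sub_cancel_right] at h'
    exact (h47.dvd_or_dvd h').elim h47d hk47
  · have hNR : (0 : ℝ) < N := by exact_mod_cast hN0
    have hfr : Int.fract (s.toNat * (a / M : ℝ)) = k / N := by
      rw [Int.fract_eq_iff]
      refine ⟨div_nonneg (by exact_mod_cast (by omega : 0 ≤ k)) hNR.le,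
        (div_lt_one hNR).mpr (by exact_mod_cast (by omega : k < N)), z, ?_⟩
      have hsR : ((s.toNat : ℕ) : ℝ) = s := by exact_mod_cast Int.toNat_of_nonneg hs0
      have hsaR : (s : ℝ) * a = d * k + M * z := by exact_mod_cast hsa
      have hMR : (M : ℝ) = d * N := by exact_mod_cast hN
      have hd : (d : ℝ) ≠ 0 := by
        have : 0 < d := pos_of_mul_pos_left (hN ▸ hM) hN0.le
        exact_mod_cast this.ne'
      rw [hsR, mul_div_assoc', hsaR, hMR]
      field_simp
      ring
    rw [hfr, mem_Icc, le_div_iff₀ hNR, div_le_iff₀ hNR]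
    constructor <;> [linarith [show (46 * N : ℝ) ≤ 100 * k by exact_mod_cast hk1];
      linarith [show (100 * k : ℝ) ≤ 54 * N by exact_mod_cast hk2]]

/-- Here `2 / m = N + 1 / 2` and `β / m = β (2 N + 1) / 4 ≈ 24 / 8648 ^ 2`. -/
theorem exists_isAdmissibleScale_of_le {β : ℝ} (hβ : 0 < β) (hsmall : β ≤ 1 / (7 * 47 ^ 4 * 48)) :
    ∃ m, IsAdmissibleScale β m := by
  set N := ⌊48 / (β * 8648 ^ 2)⌋₊
  have h1 : β * N ≤ 48 / 8648 ^ 2 := by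
    have : (N : ℝ) ≤ 48 / (β * 8648 ^ 2) := Nat.floor_le (by positivity)
    rw [le_div_iff₀ (by positivity)] at this
    rw [le_div_iff₀ (by positivity)]; linarith
  have h2 : 48 / 8648 ^ 2 < β * (N + 1) := by
    have : 48 / (β * 8648 ^ 2) < N + 1 := Nat.lt_floor_add_one _
    rw [div_lt_iff₀ (by positivity)] at this
    rw [div_lt_iff₀ (by positivity)]; linarith
  have hm : β / (4 / (2 * N + 1)) = β * (2 * N + 1) / 4 := by field_simp
  refine ⟨4 / (2 * N + 1), ?_, quadraticHitsWindow_of_mem_Icc ?_⟩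
  · rw [show 2 / (4 / (2 * N + 1) : ℝ) = 1 / 2 + N by field_simp; ring, Int.fract_add_natCast,
      Int.fract_eq_self.mpr (by norm_num)]
    norm_num
  · rw [hm]
    constructor <;> nlinarith

theorem exists_isAdmissibleScale {β : ℝ} (hβ : 0 < β)
    (hcond : Irrational β ∨ (∃ p q : ℕ, 0 < p ∧ 0 < q ∧ β = (p : ℝ) / q ∧ ¬ (47 ∣ q)) ∨
      2 ≤ β ∨ β ≤ 1 / (7 * 47 ^ 4 * 48)) :
    ∃ m, IsAdmissibleScale β m := by
  have of_fract_mul (s : ℕ) (hs : ¬ 47 ∣ s)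
      (hfr : Int.fract (s * (2 / (47 * β))) ∈ Icc (46 / 100) (54 / 100)) :
      ∃ m, IsAdmissibleScale β m :=
    ⟨_, isAdmissibleScale_of_fract_mul hβ hs hfr⟩
  rcases hcond with hirr | ⟨p, q, hp, hq, rfl, h47q⟩ | hbig | hsmall
  · have hg : Irrational (2 / (47 * β)) := by
      simpa using (hirr.natCast_mul (m := 47) (by norm_num)).natCast_div (m := 2) (by norm_num)
    obtain ⟨s, hs, hfr⟩ := exists_not_dvd_fract_mul_mem_of_irrational hg
    exact of_fract_mul s hs hfr
  · obtain ⟨s, hs, hfr⟩ := exists_not_dvd_fract_mul_mem_of_rat (a := 2 * q) (M := 47 * p)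
      (by positivity) (dvd_mul_right _ _) (by omega)
    refine of_fract_mul s hs ?_
    convert hfr using 3
    push_cast
    field_simp
  · obtain ⟨s, hs, hfr⟩ := exists_not_dvd_fract_mul_mem_of_pos_of_le (g := 2 / (47 * β))
      (by positivity) (by rw [div_le_div_iff₀ (by positivity) (by norm_num)]; linarith)
    exact of_fract_mul s hs hfr
  · exact exists_isAdmissibleScale_of_le hβ hsmall

section Coloring

variable {E : Type*} [NormedAddCommGroup E] [InnerProductSpace ℝ E]

theorem norm_add_smul_sq (x v : E) (c : ℝ) :
    ‖x + c • v‖ ^ 2 = ‖x‖ ^ 2 + 2 * c * inner ℝ x v + c ^ 2 * ‖v‖ ^ 2 := by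
  rw [norm_add_sq_real, real_inner_smul_right, norm_smul, mul_pow, Real.norm_eq_abs, sq_abs]
  ring

theorem fract_sub_two_mul_add_notMem {P Q R : ℝ} (hP : Int.fract P < 23 / 100)
    (hQ : Int.fract Q < 23 / 100) (hR : Int.fract R < 23 / 100) :
    Int.fract (P - 2 * Q + R) ∉ Icc (46 / 100) (54 / 100) := by
  set F := Int.fract P - 2 * Int.fract Q + Int.fract R
  have hF : Int.fract (P - 2 * Q + R) = Int.fract F :=
    Int.fract_eq_fract.mpr ⟨⌊P⌋ - 2 * ⌊Q⌋ + ⌊R⌋, by simp only [F, Int.fract]; push_cast; ring⟩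
  have := Int.fract_nonneg P
  have := Int.fract_nonneg Q
  have := Int.fract_nonneg R
  rw [hF]
  rintro ⟨h1, h2⟩
  rcases le_or_gt 0 F with hF0 | hF0
  · rw [Int.fract_eq_self.mpr ⟨hF0, by linarith⟩] at h1
    linarith
  · have : Int.fract F = F + 1 :=
      Int.fract_eq_iff.mpr ⟨by linarith, by linarith, -1, by push_cast; ring⟩
    linarith

variable (E) in
def redSet (m : ℝ) : Set E := {x | Int.fract (‖x‖ ^ 2 / m) < 23 / 100}

theorem not_exists_red_unit_progression {m : ℝ}
    (hm : Int.fract (2 / m) ∈ Icc (46 / 100) (54 / 100)) :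
    ¬ ∃ x v : E, ‖v‖ = 1 ∧ x ∈ redSet E m ∧ x + v ∈ redSet E m ∧ x + (2 : ℝ) • v ∈ redSet E m := by
  rintro ⟨x, v, hv, h0, h1, h2⟩
  refine fract_sub_two_mul_add_notMem h0 h1 h2 ?_
  convert hm using 2
  have h1 := norm_add_smul_sq x v 1
  rw [one_smul] at h1
  rw [h1, norm_add_smul_sq, hv]
  ring

theorem not_exists_blue_progression {α m : ℝ} (hθ : QuadraticHitsWindow (α ^ 2 / m)) :
    ¬ ∃ x v : E, ‖v‖ = α ∧ ∀ i : ℕ, i ≤ 8648 → x + (i : ℝ) • v ∈ (redSet E m)ᶜ := by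
  rintro ⟨x, v, hv, hblue⟩
  obtain ⟨i, hi, hfr⟩ := hθ (‖x‖ ^ 2 / m) (2 * inner ℝ x v / m)
  refine hblue i hi ?_
  change Int.fract (‖x + (i : ℝ) • v‖ ^ 2 / m) < 23 / 100
  convert hfr using 2
  rw [norm_add_smul_sq, hv]
  ring

end Coloring

end ProgressionColoring

open ProgressionColoring

theorem stmt_1_general (n : ℕ) (α : ℝ) (hα : 0 < α)
    (hcond : Irrational (α ^ 2) ∨
      (∃ p q : ℕ, 0 < p ∧ 0 < q ∧ α ^ 2 = (p : ℝ) / q ∧ ¬ (47 ∣ q)) ∨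
      2 ≤ α ^ 2 ∨
      α ^ 2 ≤ 1 / (7 * 47 ^ 4 * 48)) :
    ∃ R : Set (EuclideanSpace ℝ (Fin n)),
      (¬ ∃ (x v : EuclideanSpace ℝ (Fin n)), ‖v‖ = 1 ∧
          x ∈ R ∧ x + v ∈ R ∧ x + (2 : ℝ) • v ∈ R) ∧
      (¬ ∃ (x v : EuclideanSpace ℝ (Fin n)), ‖v‖ = α ∧
          ∀ i : ℕ, i ≤ 8648 → x + (i : ℝ) • v ∈ Rᶜ) := by
  obtain ⟨m, hm, hθ⟩ := exists_isAdmissibleScale (pow_pos hα 2) hcond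
  exact ⟨redSet _ m, not_exists_red_unit_progression hm, not_exists_blue_progression hθ⟩

/-- For every positive integer `n` and every real `α > 0` satisfying one of the four
conditions, there is a red/blue coloring of `ℝⁿ` with no red unit 3-progression and
no blue `α`-progression of length 8649. -/
theorem stmt_1 (n : ℕ) (hn : 0 < n) (α : ℝ) (hα : 0 < α)
    (hcond : Irrational (α ^ 2) ∨
      (∃ p q : ℕ, 0 < p ∧ 0 < q ∧ α ^ 2 = (p : ℝ) / q ∧ ¬ (47 ∣ q)) ∨
      2 ≤ α ^ 2 ∨
      α ^ 2 ≤ 1 / (7 * 47 ^ 4 * 48)) :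
    ∃ R : Set (EuclideanSpace ℝ (Fin n)),
      (¬ ∃ (x v : EuclideanSpace ℝ (Fin n)), ‖v‖ = 1 ∧
          x ∈ R ∧ x + v ∈ R ∧ x + (2 : ℝ) • v ∈ R) ∧
      (¬ ∃ (x v : EuclideanSpace ℝ (Fin n)), ‖v‖ = α ∧
          ∀ i : ℕ, i ≤ 8648 → x + (i : ℝ) • v ∈ Rᶜ) :=
  stmt_1_general n α hα hcond
end

section
/- For all real numbers β and x₀, there exists c ∈ ℤ/29ℤ such that for every square s ∈ S₂₉ there exists an integer i with 0 ≤ i ≤ 1176 for which ⌊i² + β·i + x₀⌋ is congruent to c + s modulo 29. -/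
/-!
By Dirichlet's theorem, `q * β = p + ε` with `0 < q ≤ 40`, `p` coprime to `q` and `|ε| ≤ 1/41`.
Along a progression `i = q * k + b`, `0 ≤ k ≤ 28`, we have
`⌊i² + β i + x₀⌋ = i² + p k + ⌊x₀ + β b + ε k⌋`, and `b` can be chosen so that `i ≤ 1176` and the
last floor does not depend on `k`: for `q ≤ 21` take `b = q t₀` with the window starting right
after the floor of `x₀ + ε t` jumps; for `q ≥ 22` use that `p b / q` runs through all residues
modulo `1 / q`. Modulo 29 the floor is then the quadratic `q² k² + (2 q b + p) k + const`, not
constant because 29 does not divide both `p` and `q`, and `k` runs through all of `ZMod 29`;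
completing the square, its values contain a translate of the squares.
-/

lemma exists_shift_squares_subset_range_quadratic {F : Type*} [Field F] (h2 : (2 : F) ≠ 0)
    {a b c : F} (hab : a ≠ 0 ∨ b ≠ 0) :
    ∃ d : F, ∀ s : F, (∃ t, s = t ^ 2) → ∃ T, a ^ 2 * T ^ 2 + b * T + c = d + s := by
  by_cases ha : a = 0
  · have hb : b ≠ 0 := hab.resolve_left (not_not.mpr ha)
    refine ⟨c, fun s _ => ⟨s / b, ?_⟩⟩
    rw [ha, mul_div_cancel₀ s hb]
    ring
  · refine ⟨c - (b / (2 * a)) ^ 2, ?_⟩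
    rintro s ⟨t, rfl⟩
    refine ⟨(t - b / (2 * a)) / a, ?_⟩
    field_simp
    ring

lemma exists_floor_const_window_of_nonneg {x ε : ℝ} {N : ℕ} (hε : 0 ≤ ε)
    (hεN : ε * (N + 1) ≤ 1) :
    ∃ t₀ ≤ N, ∃ v : ℤ, ∀ k ≤ N, ⌊x + ε * (t₀ + k)⌋ = v := by
  have hx := Int.floor_le x
  have hx' := Int.lt_floor_add_one x
  by_cases hN : x + ε * N < ⌊x⌋ + 1
  · refine ⟨0, N.zero_le, ⌊x⌋, fun k hk => ?_⟩
    have hk' : (k : ℝ) ≤ N := by exact_mod_cast hk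
    rw [Int.floor_eq_iff]
    push_cast
    constructor <;> nlinarith
  · classical
    -- Start the window at the first step where the floor has gone up.
    have hex : ∃ t : ℕ, (⌊x⌋ : ℝ) + 1 ≤ x + ε * t := ⟨N, not_lt.mp hN⟩
    refine ⟨Nat.find hex, Nat.find_le (not_lt.mp hN), ⌊x⌋ + 1, fun k hk => ?_⟩
    obtain ⟨s, hs⟩ : ∃ s, Nat.find hex = s + 1 :=
      Nat.exists_eq_succ_of_ne_zero (by simp [Nat.find_eq_zero, hx'])
    have hafter := Nat.find_spec hex
    have hbefore : x + ε * s < ⌊x⌋ + 1 := not_le.mp (Nat.find_min hex (by omega))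
    rw [hs] at hafter ⊢
    have hk' : (k : ℝ) ≤ N := by exact_mod_cast hk
    rw [Int.floor_eq_iff]
    push_cast at hafter ⊢
    constructor <;> nlinarith

lemma exists_floor_const_window {x ε : ℝ} {N : ℕ} (hε : |ε| * (N + 1) ≤ 1) :
    ∃ t₀ ≤ N, ∃ v : ℤ, ∀ k ≤ N, ⌊x + ε * (t₀ + k)⌋ = v := by
  rcases le_total 0 ε with hε0 | hε0
  · exact exists_floor_const_window_of_nonneg hε0 (by rwa [abs_of_nonneg hε0] at hε)
  · -- Read backwards, the window has the positive slope `-ε`.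
    obtain ⟨t₀, ht₀, v, hv⟩ := exists_floor_const_window_of_nonneg (x := x + ε * (2 * N))
      (neg_nonneg.mpr hε0) (by rwa [abs_of_nonpos hε0] at hε)
    refine ⟨N - t₀, N.sub_le t₀, v, fun k hk => ?_⟩
    rw [← hv (N - k) (N.sub_le k)]
    push_cast [ht₀, hk]
    ring_nf

lemma IsCoprime.exists_lt_mul_eq_add_mul {p : ℤ} {q : ℕ} (hq : 0 < q) (hpq : IsCoprime p q)
    (m : ℤ) : ∃ r < q, ∃ w : ℤ, p * r = m + q * w := by
  obtain ⟨u, v, huv⟩ := hpq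
  have hq' : (0 : ℤ) < q := by exact_mod_cast hq
  have hlt := Int.emod_lt_of_pos (m * u) hq'
  refine ⟨(m * u % q).toNat, by omega, -(m * v) - p * (m * u / q), ?_⟩
  rw [Int.toNat_of_nonneg (Int.emod_nonneg _ hq'.ne'), Int.emod_def]
  linear_combination m * huv

lemma exists_lt_abs_add_mul_div_sub_half_le {x : ℝ} {p : ℤ} {q : ℕ} (hq : 0 < q)
    (hpq : IsCoprime p q) :
    ∃ r < q, ∃ w : ℤ, |x + p * r / q - w - 1 / 2| ≤ 1 / (2 * q) := by
  obtain ⟨r, hr, w, hrw⟩ := hpq.exists_lt_mul_eq_add_mul hq (round ((1 / 2 - x) * q))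
  refine ⟨r, hr, w, ?_⟩
  have hq' : (0 : ℝ) < q := by exact_mod_cast hq
  have hround := abs_sub_round ((1 / 2 - x) * q)
  have hrw' : (p : ℝ) * r = round ((1 / 2 - x) * q) + q * w := by exact_mod_cast hrw
  have key : x + p * r / q - w - 1 / 2 = -((1 / 2 - x) * q - round ((1 / 2 - x) * q)) / q := by
    rw [hrw']; field_simp; ring
  rw [key, abs_div, abs_neg, abs_of_pos hq', div_le_div_iff₀ hq' (by positivity)]
  nlinarith

lemma exists_floor_const_window_of_isCoprime {x β ε : ℝ} {p : ℤ} {q N : ℕ} (hq : 0 < q)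
    (hpq : IsCoprime p q) (hβ : q * β = p + ε) (h : 1 / q + (N + 2) * |ε| < 1) :
    ∃ r < q, ∃ v : ℤ, ∀ k ≤ N, ⌊x + β * r + ε * k⌋ = v := by
  -- Choose the offset `r` so that the middle of the window lies near the middle of `[w, w + 1)`.
  obtain ⟨r, hr, w, hw⟩ := exists_lt_abs_add_mul_div_sub_half_le (x := x + ε * N / 2) hq hpq
  refine ⟨r, hr, w, fun k hk => ?_⟩
  have hq' : (0 : ℝ) < q := by exact_mod_cast hq
  have hrq : |(r : ℝ) / q| ≤ 1 := by
    rw [abs_div, Nat.abs_cast, Nat.abs_cast, div_le_one hq']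
    exact_mod_cast hr.le
  have hkN : |(k : ℝ) - N / 2| ≤ N / 2 := by
    have : (k : ℝ) ≤ N := by exact_mod_cast hk
    rw [abs_le]; constructor <;> linarith [k.cast_nonneg (α := ℝ)]
  have hsplit : x + β * r + ε * k - w - 1 / 2
      = (x + ε * N / 2 + p * r / q - w - 1 / 2) + ε * (r / q) + ε * (k - N / 2) := by
    rw [show β = (p + ε) / q by rw [← hβ]; field_simp]
    field_simp
    ring
  have hcentre : |x + β * r + ε * k - w - 1 / 2| < 1 / 2 :=
    calc |x + β * r + ε * k - w - 1 / 2|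
        ≤ |x + ε * N / 2 + p * r / q - w - 1 / 2| + |ε| * |(r : ℝ) / q|
            + |ε| * |(k : ℝ) - N / 2| := by
          rw [hsplit, ← abs_mul, ← abs_mul]
          exact abs_add_three _ _ _
      _ ≤ 1 / (2 * q) + |ε| * 1 + |ε| * (N / 2) := by gcongr
      _ < 1 / 2 := by
          have : 1 / (2 * (q : ℝ)) = 1 / q / 2 := by field_simp
          linarith
  rw [Int.floor_eq_iff]
  constructor <;> linarith [abs_lt.mp hcentre]

lemma exists_progression_floor_eq_linear (β x : ℝ) :
    ∃ (q b : ℕ) (p v : ℤ), ((q : ZMod 29) ≠ 0 ∨ (p : ZMod 29) ≠ 0) ∧ 28 * q + b ≤ 1176 ∧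
      ∀ k ≤ 28, ⌊β * (q * k + b : ℕ) + x⌋ = p * k + v := by
  obtain ⟨ρ, hρ, hden⟩ := Real.exists_rat_abs_sub_le_and_den_le β (n := 40) (by norm_num)
  set q := ρ.den
  set p := ρ.num
  have hq : 0 < q := ρ.den_pos
  have hpq : IsCoprime p q := ρ.isCoprime_num_den
  have hε : |q * β - p| ≤ 1 / 41 := by
    rw [Rat.cast_def] at hρ
    rw [show (q : ℝ) * β - p = q * (β - p / q) by field_simp, abs_mul, Nat.abs_cast]
    calc (q : ℝ) * |β - p / q| ≤ q * (1 / ((40 + 1) * q)) := by gcongr; push_cast at hρ; exact hρ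
      _ = 1 / 41 := by field_simp; norm_num
  have hnondeg : (q : ZMod 29) ≠ 0 ∨ (p : ZMod 29) ≠ 0 := by
    by_contra! h
    rw [← Int.cast_natCast, ZMod.intCast_zmod_eq_zero_iff_dvd,
      ZMod.intCast_zmod_eq_zero_iff_dvd] at h
    exact absurd (hpq.isUnit_of_dvd' h.2 h.1) (by norm_num [Int.isUnit_iff])
  have hβ : (q : ℝ) * β = p + (q * β - p) := by ring
  rcases le_or_gt q 21 with hsmall | hlarge
  · obtain ⟨t₀, ht₀, v, hv⟩ := exists_floor_const_window (x := x) (N := 28) (ε := q * β - p)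
      (by push_cast; linarith)
    refine ⟨q, q * t₀, p, p * t₀ + v, hnondeg, by nlinarith, fun k hk => ?_⟩
    rw [show β * (q * k + q * t₀ : ℕ) + x
        = (p * (t₀ + k) : ℤ) + (x + (q * β - p) * (t₀ + k)) by push_cast; ring,
      Int.floor_intCast_add, hv k hk]
    ring
  · obtain ⟨r, hr, v, hv⟩ := exists_floor_const_window_of_isCoprime (x := x) (N := 28) hq hpq hβ
      (by
        have : 1 / (q : ℝ) ≤ 1 / 22 := by gcongr; exact_mod_cast hlarge
        push_cast; linarith)
    refine ⟨q, r, p, v, hnondeg, by omega, fun k hk => ?_⟩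
    rw [show β * (q * k + r : ℕ) + x = (p * k : ℤ) + (x + β * r + (q * β - p) * k) by
        push_cast; ring, Int.floor_intCast_add, hv k hk]

/-- For all real `β`, `x₀` there is `c ∈ ℤ/29ℤ` such that every square `s` mod 29
is hit, shifted by `c`, by `⌊i² + βi + x₀⌋` for some `0 ≤ i ≤ 1176`. -/
theorem stmt_5 (β x₀ : ℝ) :
    ∃ c : ZMod 29, ∀ s : ZMod 29, (∃ t : ZMod 29, s = t ^ 2) →
      ∃ i : ℕ, i ≤ 1176 ∧
        ((⌊(i : ℝ) ^ 2 + β * i + x₀⌋ : ℤ) : ZMod 29) = c + s := by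
  have h2 : (2 : ZMod 29) ≠ 0 := by decide
  have : Fact (Nat.Prime 29) := ⟨by norm_num⟩
  obtain ⟨q, b, p, v, hnondeg, hle, hfloor⟩ := exists_progression_floor_eq_linear β x₀
  have hquad : (q : ZMod 29) ≠ 0 ∨ 2 * q * b + (p : ZMod 29) ≠ 0 := by
    rcases hnondeg with hq | hp
    · exact Or.inl hq
    · by_cases hq : (q : ZMod 29) = 0
      · exact Or.inr (by simpa [hq] using hp)
      · exact Or.inl hq
  obtain ⟨c, hc⟩ := exists_shift_squares_subset_range_quadratic h2 hquad
    (c := (b : ZMod 29) ^ 2 + v)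
  refine ⟨c, fun s hs => ?_⟩
  obtain ⟨T, hT⟩ := hc s hs
  have hT29 := T.val_lt
  refine ⟨q * T.val + b, by nlinarith, ?_⟩
  rw [show ((q * T.val + b : ℕ) : ℝ) ^ 2 + β * (q * T.val + b : ℕ) + x₀
      = ((q * T.val + b) ^ 2 : ℕ) + (β * (q * T.val + b : ℕ) + x₀) by push_cast; ring,
    Int.floor_natCast_add, hfloor T.val (by omega)]
  push_cast
  rw [ZMod.natCast_zmod_val]
  linear_combination hT
end

section
/- Let x, y, z ∈ ℝⁿ satisfy x − 2y + z = 0 and ‖x − y‖ = ‖y − z‖ = 1. Then it is not the case that all three residues of ⌊‖x‖²⌋, ⌊‖y‖²⌋, ⌊‖z‖²⌋ modulo 29 lie in {0, 4, 8, 12}. (The coloring of ℝⁿ in which a point x is red exactly when ⌊‖x‖²⌋ mod 29 ∈ {0, 4, 8, 12} contains no red 1-progression of length 3.) -/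
lemma stmt_10_aux (u v w : ZMod 29)
    (hu : u = 0 ∨ u = 4 ∨ u = 8 ∨ u = 12)
    (hv : v = 0 ∨ v = 4 ∨ v = 8 ∨ v = 12)
    (hw : w = 0 ∨ w = 4 ∨ w = 8 ∨ w = 12) :
    u + w - 2 * v ≠ 1 ∧ u + w - 2 * v ≠ 2 ∧ u + w - 2 * v ≠ 3 := by
  rcases hu with rfl | rfl | rfl | rfl <;>
  rcases hv with rfl | rfl | rfl | rfl <;>
  rcases hw with rfl | rfl | rfl | rfl <;> decide

/-- If `x, y, z` form a unit 3-progression, then the residues of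
`⌊‖x‖²⌋, ⌊‖y‖²⌋, ⌊‖z‖²⌋` modulo 29 cannot all lie in `{0, 4, 8, 12}`. -/
theorem stmt_10 (n : ℕ) (x y z : EuclideanSpace ℝ (Fin n))
    (hprog : x - (2 : ℝ) • y + z = 0)
    (hxy : ‖x - y‖ = 1) (hyz : ‖y - z‖ = 1) :
    ¬ (((⌊‖x‖ ^ 2⌋ : ℤ) : ZMod 29) ∈ ({0, 4, 8, 12} : Set (ZMod 29)) ∧
       ((⌊‖y‖ ^ 2⌋ : ℤ) : ZMod 29) ∈ ({0, 4, 8, 12} : Set (ZMod 29)) ∧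
       ((⌊‖z‖ ^ 2⌋ : ℤ) : ZMod 29) ∈ ({0, 4, 8, 12} : Set (ZMod 29))) := by
  rintro ⟨hx, hy, hz⟩
  have hx' : x = y + (x - y) := by abel
  have hz' : z = y - (x - y) := by
    have h : z = (2 : ℝ) • y - x := by linear_combination (norm := module) hprog
    rw [h]; module
  have hsq : ‖x - y‖ ^ 2 = 1 := by rw [hxy]; norm_num
  have hpar : ‖x‖ ^ 2 + ‖z‖ ^ 2 = 2 * ‖y‖ ^ 2 + 2 := by
    rw [hx', hz', norm_add_sq_real, hsq, norm_sub_sq_real, hsq]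
    ring
  set a := ⌊‖x‖ ^ 2⌋ with ha
  set b := ⌊‖y‖ ^ 2⌋ with hb
  set c := ⌊‖z‖ ^ 2⌋ with hc
  have h1 : 2 * b + 1 ≤ a + c := by
    have h2b : ((b : ℝ)) ≤ ‖y‖ ^ 2 := Int.floor_le _
    have hax : (‖x‖ : ℝ) ^ 2 < a + 1 := Int.lt_floor_add_one _
    have hcz : (‖z‖ : ℝ) ^ 2 < c + 1 := Int.lt_floor_add_one _
    have h : (2 * b : ℝ) < (a : ℝ) + c := by push_cast; linarith
    have h' : 2 * b < a + c := by exact_mod_cast h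
    omega
  have h2 : a + c ≤ 2 * b + 3 := by
    have hax : (a : ℝ) ≤ ‖x‖ ^ 2 := Int.floor_le _
    have hcz : (c : ℝ) ≤ ‖z‖ ^ 2 := Int.floor_le _
    have hby : ‖y‖ ^ 2 < (b : ℝ) + 1 := Int.lt_floor_add_one _
    have h : (a : ℝ) + c < 2 * b + 4 := by push_cast; linarith
    have h' : a + c < 2 * b + 4 := by exact_mod_cast h
    omega
  have hdz : ((a + c - 2 * b : ℤ) : ZMod 29) =
      ((a : ℤ) : ZMod 29) + ((c : ℤ) : ZMod 29) - 2 * ((b : ℤ) : ZMod 29) := by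
    push_cast; ring
  simp only [Set.mem_insert_iff, Set.mem_singleton_iff] at hx hy hz
  obtain ⟨n1, n2, n3⟩ := stmt_10_aux _ _ _ hx hy hz
  have hd : a + c - 2 * b = 1 ∨ a + c - 2 * b = 2 ∨ a + c - 2 * b = 3 := by omega
  rcases hd with hd | hd | hd <;> rw [hd] at hdz <;>
    [exact n1 hdz.symm; exact n2 hdz.symm; exact n3 hdz.symm]
end

section
/- For every x₀ ∈ ℝⁿ and every v ∈ ℝⁿ with ‖v‖ = 1, there exists an integer i with 0 ≤ i ≤ 1176 such that the residue of ⌊‖x₀ + i·v‖²⌋ modulo 29 lies in {0, 4, 8, 12}. (The coloring of ℝⁿ in which a point x is blue exactly when ⌊‖x‖²⌋ mod 29 ∉ {0, 4, 8, 12} contains no blue 1-progression of length 1177.) -/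
/-!
Write `A = ‖x₀‖²` and `θ = 2⟪x₀, v⟫`, so that `⌊‖x₀ + i v‖²⌋ = i² + ⌊A + θ i⌋`.
If on a progression `i = i₀ + t m`, `m ≤ 28`, the floor is linear, `⌊A + θ i⌋ = ⌊A + θ i₀⌋ + h m`,
the value mod 29 is a quadratic `t² m² + b m + c` in `m`; when `t` and `b` are not both zero
mod 29 such a quadratic takes a value in `{0, 4, 8, 12}` (substitute `m = y / t` and check the
monic quadratics).

To find the progression take `t` least with `|t θ - h| ≤ 1/41` for some integer `h`; Dirichlet
gives `t ≤ 40`, and minimality forces `29 ∤ gcd(t, h)` and makes the fractional parts of `A + θ p`,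
`p < t`, pairwise more than `1/41` apart. With `η = t θ - h`, the floor is linear on the run from
`i₀` as soon as `A + θ i₀ + m η`, `m ≤ 28`, stay in one unit cell. Either some `p < t` reaches such
a start after at most `29 - t` steps of `η`, or all `t` fractional parts lie in one interval of
length `(t - 1) |η|`, which the separation rules out.
-/

open Int Set

theorem ZMod29.exists_sq_add_mul_add_mem (b c : ZMod 29) :
    ∃ x : ZMod 29, x ^ 2 + b * x + c ∈ ({0, 4, 8, 12} : Set (ZMod 29)) := by
  have key : ∀ b c : ZMod 29, ∃ x : ZMod 29,
      x ^ 2 + b * x + c ∈ ({0, 4, 8, 12} : Finset (ZMod 29)) := by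
    decide
  obtain ⟨x, hx⟩ := key b c
  exact ⟨x, by simpa using hx⟩

theorem ZMod29.exists_sq_mul_sq_add_mul_add_mem {t b : ZMod 29} (htb : t ≠ 0 ∨ b ≠ 0)
    (c : ZMod 29) :
    ∃ x : ZMod 29, t ^ 2 * x ^ 2 + b * x + c ∈ ({0, 4, 8, 12} : Set (ZMod 29)) := by
  have : Fact (Nat.Prime 29) := ⟨by norm_num⟩
  by_cases ht : t = 0
  · subst ht
    refine ⟨-c / b, Or.inl ?_⟩
    field_simp [htb.resolve_left (not_not.mpr rfl)]
    ring
  · obtain ⟨y, hy⟩ := exists_sq_add_mul_add_mem (b / t) c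
    refine ⟨y / t, ?_⟩
    convert hy using 1
    field_simp

theorem exists_sq_add_mem_of_linear_run (f : ℕ → ℤ) {i₀ t : ℕ} {h : ℤ}
    (hth : (t : ZMod 29) ≠ 0 ∨ (h : ZMod 29) ≠ 0)
    (hrun : ∀ m ≤ 28, f (i₀ + t * m) = f i₀ + h * m) :
    ∃ m ≤ 28, ((((i₀ + t * m) ^ 2 : ℕ) + f (i₀ + t * m) : ℤ) : ZMod 29) ∈
      ({0, 4, 8, 12} : Set (ZMod 29)) := by
  have htb : (t : ZMod 29) ≠ 0 ∨ 2 * i₀ * t + (h : ZMod 29) ≠ 0 := by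
    by_cases ht : (t : ZMod 29) = 0
    · simpa [ht] using hth
    · exact Or.inl ht
  obtain ⟨x, hx⟩ := ZMod29.exists_sq_mul_sq_add_mul_add_mem htb ((i₀ : ZMod 29) ^ 2 + f i₀)
  refine ⟨x.val, Nat.le_of_lt_succ x.val_lt, ?_⟩
  rw [hrun x.val (Nat.le_of_lt_succ x.val_lt)]
  convert hx using 1
  push_cast
  rw [ZMod.natCast_zmod_val]
  ring

section FloorRing

variable {K : Type*} [Field K] [LinearOrder K] [IsStrictOrderedRing K] [FloorRing K]

theorem floor_add_mul_eq_of_le {x η : K} {m N : ℕ} (hmN : m ≤ N) (hN : ⌊x + N * η⌋ = ⌊x⌋) :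
    ⌊x + m * η⌋ = ⌊x⌋ := by
  have hm : (m : K) ≤ N := by exact_mod_cast hmN
  rcases le_total 0 η with hη | hη
  · exact le_antisymm (hN ▸ floor_mono (by nlinarith)) (floor_mono (by nlinarith))
  · exact le_antisymm (floor_mono (by nlinarith)) (hN ▸ floor_mono (by nlinarith))

-- `b` has just crossed an integer, so it lies within `|η|` of the edge of its cell.
theorem floor_add_mul_eq_of_floor_sub_ne {b η : K} {N : ℕ} (hη : (N + 1) * |η| ≤ 1)
    (hb : ⌊b - η⌋ ≠ ⌊b⌋) : ⌊b + N * η⌋ = ⌊b⌋ := by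
  have hN : (0 : K) ≤ N := N.cast_nonneg
  rcases le_total 0 η with h0 | h0
  · rw [abs_of_nonneg h0] at hη
    have hlt : b - η < ⌊b⌋ := floor_lt.mp (lt_of_le_of_ne (floor_mono (by linarith)) hb)
    have : ⌊b + N * η⌋ < ⌊b⌋ + 1 := floor_lt.mpr (by push_cast; nlinarith)
    exact le_antisymm (by omega) (floor_mono (by nlinarith))
  · rw [abs_of_nonpos h0] at hη
    have hlt : (⌊b⌋ + 1 : ℤ) ≤ b - η :=
      le_floor.mp (lt_of_le_of_ne (floor_mono (by linarith)) hb.symm)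
    have : ⌊b⌋ + 1 ≤ ⌊b + N * η + 1⌋ := le_floor.mpr (by push_cast at hlt ⊢; nlinarith)
    rw [floor_add_one] at this
    exact le_antisymm (floor_mono (by nlinarith)) (by omega)

theorem exists_floor_add_mul_eq_of_floor_ne {y η : K} {N : ℕ} (hη : (N + 1) * |η| ≤ 1) :
    ∀ {Q : ℕ}, ⌊y + Q * η⌋ ≠ ⌊y⌋ → ∃ q ≤ Q, ⌊y + q * η + N * η⌋ = ⌊y + q * η⌋
  | 0, hQ => by simp at hQ
  | Q + 1, hQ => by
    by_cases hprev : ⌊y + Q * η⌋ = ⌊y⌋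
    · refine ⟨Q + 1, le_rfl, floor_add_mul_eq_of_floor_sub_ne hη ?_⟩
      push_cast at hQ ⊢
      rwa [show y + (Q + 1) * η - η = y + Q * η by ring, hprev, ne_comm]
    · obtain ⟨q, hq, hstable⟩ := exists_floor_add_mul_eq_of_floor_ne hη hprev
      exact ⟨q, hq.trans Q.le_succ, hstable⟩

theorem exists_fract_mem_Ico (η : K) (a b : ℕ) : ∃ c : K, ∀ x : K,
    ⌊x + a * η⌋ = ⌊x⌋ → ⌊x + b * η⌋ ≠ ⌊x⌋ → fract x ∈ Ico c (c + (b - a) * |η|) := by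
  have hb : (0 : K) ≤ b := b.cast_nonneg
  rcases le_total 0 η with hη | hη
  · refine ⟨1 - b * η, fun x hxa hxb => ?_⟩
    have hjump : (⌊x⌋ + 1 : ℤ) ≤ x + b * η :=
      le_floor.mp (lt_of_le_of_ne (floor_mono (by nlinarith)) hxb.symm)
    have := (floor_eq_iff.mp hxa).2
    rw [← self_sub_floor, abs_of_nonneg hη]
    push_cast at hjump
    constructor <;> linarith
  · refine ⟨-(a * η), fun x hxa hxb => ?_⟩
    have hjump : x + b * η < ⌊x⌋ :=
      floor_lt.mp (lt_of_le_of_ne (floor_mono (by nlinarith)) hxb)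
    have := (floor_eq_iff.mp hxa).1
    rw [← self_sub_floor, abs_of_nonpos hη]
    constructor <;> linarith

theorem exists_notMem_Ico_of_lt_abs_sub (x : ℕ → K) {t : ℕ} (ht : 1 ≤ t) {δ ℓ : K}
    (hsep : ∀ p < t, ∀ q < t, p ≠ q → δ < |x p - x q|) (hℓ : ℓ ≤ (t - 1) * δ) (c : K) :
    ∃ p < t, x p ∉ Ico c (c + ℓ) := by
  by_contra! hmem
  have hℓ0 : 0 < ℓ := by linarith [(hmem 0 ht).1, (hmem 0 ht).2]
  have ht1 : (0 : K) < t - 1 := by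
    rcases ht.eq_or_lt with rfl | ht2
    · norm_num at hℓ; linarith
    · have : (2 : K) ≤ t := by exact_mod_cast ht2
      linarith
  -- `⌊u p⌋` says which of the `t - 1` equal parts of `[c, c + ℓ)` contains `x p`
  set u : ℕ → K := fun p => (x p - c) * (t - 1) / ℓ with hu
  have hmaps : MapsTo (fun p => ⌊u p⌋) (Finset.range t) (Finset.Ico 0 ((t : ℤ) - 1)) := by
    intro p hp
    obtain ⟨hcp, hpc⟩ := hmem p (Finset.mem_range.mp hp)
    simp only [Finset.coe_Ico, mem_Ico, floor_nonneg, floor_lt]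
    constructor
    · exact div_nonneg (mul_nonneg (by linarith) ht1.le) hℓ0.le
    · rw [div_lt_iff₀ hℓ0]; push_cast; nlinarith
  obtain ⟨p, hp, q, hq, hpq, hfloor⟩ :=
    Finset.exists_ne_map_eq_of_card_lt_of_maps_to (by simp; omega) hmaps
  have hdist : (t - 1) * |x p - x q| = ℓ * |u p - u q| := by
    rw [← abs_of_pos ht1, ← abs_of_pos hℓ0, ← abs_mul, ← abs_mul]
    congr 1
    simp only [hu]
    field_simp
    ring
  have hsep_pq := hsep p (Finset.mem_range.mp hp) q (Finset.mem_range.mp hq) hpq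
  have hclose := abs_sub_lt_one_of_floor_eq_floor hfloor
  nlinarith

theorem exists_floor_add_mul_eq_of_lt_abs_fract_sub (z : ℕ → K) {t k N : ℕ} {h : ℤ}
    {η δ : K} (hz : ∀ p q : ℕ, z (p + t * q) = z p + q * η + (h * q : ℤ)) (ht : 1 ≤ t)
    (hηδ : |η| ≤ δ) (hδ : (N + 1) * δ ≤ 1)
    (hsep : ∀ p < t, ∀ q < t, p ≠ q → δ < |fract (z p) - fract (z q)|)
    (htk : N + 1 ≤ t + k) :
    ∃ i₀ < t + t * k, ⌊z i₀ + N * η⌋ = ⌊z i₀⌋ := by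
  by_cases hslide : ∃ p < t, ⌊z p + k * η⌋ ≠ ⌊z p⌋
  · obtain ⟨p, hp, hpk⟩ := hslide
    obtain ⟨q, hq, hstable⟩ :=
      exists_floor_add_mul_eq_of_floor_ne (by nlinarith [abs_nonneg η]) hpk
    refine ⟨p + t * q, by nlinarith, ?_⟩
    rwa [hz, add_right_comm, floor_add_intCast, floor_add_intCast, add_left_inj]
  · push Not at hslide
    obtain ⟨c, hc⟩ := exists_fract_mem_Ico η k N
    have hℓ : (N - k) * |η| ≤ (t - 1) * δ := by
      have : (N : K) - k ≤ t - 1 := by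
        have : (N + 1 : K) ≤ t + k := by exact_mod_cast htk
        linarith
      have : (1 : K) ≤ t := by exact_mod_cast ht
      nlinarith [abs_nonneg η]
    obtain ⟨p, hp, hout⟩ := exists_notMem_Ico_of_lt_abs_sub _ ht hsep hℓ c
    exact ⟨p, by nlinarith, by_contra fun hN => hout (hc _ (hslide p hp) hN)⟩

theorem floor_apply_add_mul_eq (z : ℕ → K) {t N i₀ : ℕ} {h : ℤ} {η : K}
    (hz : ∀ p q : ℕ, z (p + t * q) = z p + q * η + (h * q : ℤ)) (hN : ⌊z i₀ + N * η⌋ = ⌊z i₀⌋) :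
    ∀ m ≤ N, ⌊z (i₀ + t * m)⌋ = ⌊z i₀⌋ + h * m := fun m hm => by
  rw [hz, floor_add_intCast, floor_add_mul_eq_of_le hm hN]

theorem natCast_ne_zero_or_intCast_ne_zero_of_minimal (θ δ : K) {t r : ℕ} {h : ℤ} (hr : 1 < r)
    (ht : 1 ≤ t) (hth : |θ * t - h| ≤ δ)
    (hmin : ∀ d : ℕ, 1 ≤ d → d < t → ∀ g : ℤ, δ < |θ * d - g|) :
    (t : ZMod r) ≠ 0 ∨ (h : ZMod r) ≠ 0 := by
  by_contra! hdvd
  rw [ZMod.natCast_eq_zero_iff, ZMod.intCast_zmod_eq_zero_iff_dvd] at hdvd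
  obtain ⟨⟨s, rfl⟩, ⟨g, rfl⟩⟩ := hdvd
  have hs : 1 ≤ s := by
    rcases s with _ | s
    · simp at ht
    · omega
  have hr' : (1 : K) < r := by exact_mod_cast hr
  have hscale : |θ * ↑(r * s) - ↑(↑r * g)| = r * |θ * s - g| := by
    rw [show θ * ↑(r * s) - ↑(↑r * g) = r * (θ * s - g) by push_cast; ring, abs_mul,
      abs_of_pos (by linarith)]
  have := hmin s hs (by nlinarith) g
  nlinarith [abs_nonneg (θ * s - g)]

end FloorRing

theorem lt_abs_fract_sub_fract {K : Type*} [CommRing K] [LinearOrder K] [FloorRing K]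
    (A θ δ : K) {t : ℕ}
    (hmin : ∀ d : ℕ, 1 ≤ d → d < t → ∀ g : ℤ, δ < |θ * d - g|) {p q : ℕ} (hp : p < t)
    (hq : q < t) (hpq : p ≠ q) : δ < |fract (A + θ * p) - fract (A + θ * q)| := by
  wlog hlt : p < q generalizing p q
  · rw [abs_sub_comm]
    exact this hq hp hpq.symm (lt_of_le_of_ne (not_lt.mp hlt) hpq.symm)
  have := hmin (q - p) (by omega) (by omega) (⌊A + θ * q⌋ - ⌊A + θ * p⌋)
  rw [abs_sub_comm, ← self_sub_floor, ← self_sub_floor]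
  convert this using 2
  push_cast [hlt.le]
  ring

theorem exists_floor_linear_run (A θ : ℝ) :
    ∃ i₀ t : ℕ, ∃ h : ℤ, i₀ + 28 * t ≤ 1176 ∧ ((t : ZMod 29) ≠ 0 ∨ (h : ZMod 29) ≠ 0) ∧
      ∀ m ≤ 28, ⌊A + θ * ↑(i₀ + t * m)⌋ = ⌊A + θ * i₀⌋ + h * m := by
  classical
  obtain ⟨t₀, ht₀, ht₀40, hround⟩ :=
    Real.exists_nat_abs_mul_sub_round_le θ (n := 40) (by norm_num)
  have hdirichlet : |θ * t₀ - round (t₀ * θ)| ≤ 1 / 41 := by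
    rw [mul_comm]
    norm_num at hround ⊢
    exact hround
  have hex : ∃ t : ℕ, 1 ≤ t ∧ ∃ h : ℤ, |θ * t - h| ≤ 1 / 41 := ⟨t₀, ht₀, _, hdirichlet⟩
  obtain ⟨ht, h, hth⟩ := Nat.find_spec hex
  have ht40 : Nat.find hex ≤ 40 := (Nat.find_min' hex ⟨ht₀, _, hdirichlet⟩).trans ht₀40
  have hmin : ∀ d : ℕ, 1 ≤ d → d < Nat.find hex → ∀ g : ℤ, 1 / 41 < |θ * d - g| :=
    fun d hd hdt g => not_le.mp fun hle => Nat.find_min hex hdt ⟨hd, g, hle⟩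
  generalize Nat.find hex = t at ht ht40 hth hmin
  have hz : ∀ p q : ℕ, A + θ * ↑(p + t * q) = A + θ * p + q * (θ * t - h) + (h * q : ℤ) := by
    intro p q
    push_cast
    ring
  obtain ⟨i₀, hi₀, hstable⟩ :=
    exists_floor_add_mul_eq_of_lt_abs_fract_sub (fun p : ℕ => A + θ * p) (k := 29 - t) (N := 28)
      hz ht hth (by norm_num)
      (fun p hp q hq hpq => lt_abs_fract_sub_fract A θ _ hmin hp hq hpq) (by omega)
  refine ⟨i₀, t, h, ?_,
    natCast_ne_zero_or_intCast_ne_zero_of_minimal θ _ (by norm_num) ht hth hmin,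
    floor_apply_add_mul_eq (fun p : ℕ => A + θ * p) hz hstable⟩
  interval_cases t <;> omega

theorem floor_norm_add_nsmul_sq {E : Type*} [NormedAddCommGroup E] [InnerProductSpace ℝ E]
    (x v : E) (hv : ‖v‖ = 1) (i : ℕ) :
    ⌊‖x + (i : ℝ) • v‖ ^ 2⌋ = ((i ^ 2 : ℕ) : ℤ) + ⌊‖x‖ ^ 2 + 2 * inner ℝ x v * i⌋ := by
  rw [norm_add_sq_real, norm_smul, hv, real_inner_smul_right, Real.norm_natCast,
    ← floor_natCast_add]
  push_cast
  ring_nf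

/-- Along any unit 1177-progression in `ℝⁿ` there is a point whose squared norm,
rounded down, is congruent mod 29 to an element of `{0, 4, 8, 12}`. -/
theorem stmt_11 (n : ℕ) (x₀ v : EuclideanSpace ℝ (Fin n)) (hv : ‖v‖ = 1) :
    ∃ i : ℕ, i ≤ 1176 ∧
      ((⌊‖x₀ + (i : ℝ) • v‖ ^ 2⌋ : ℤ) : ZMod 29) ∈
        ({0, 4, 8, 12} : Set (ZMod 29)) := by
  obtain ⟨i₀, t, h, hbudget, hth, hrun⟩ :=
    exists_floor_linear_run (‖x₀‖ ^ 2) (2 * inner ℝ x₀ v)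
  obtain ⟨m, hm, hmem⟩ := exists_sq_add_mem_of_linear_run
    (fun i : ℕ => ⌊‖x₀‖ ^ 2 + 2 * inner ℝ x₀ v * i⌋) hth hrun
  refine ⟨i₀ + t * m, by have := Nat.mul_le_mul_left t hm; omega, ?_⟩
  rwa [floor_norm_add_nsmul_sq x₀ v hv]
end

section
/- Let α be a real number with 47N + 1 ≤ α² ≤ 47N + 3/2 for some nonnegative integer N, and let x, y, z ∈ ℝⁿ satisfy x − 2y + z = 0 and ‖x − y‖ = ‖y − z‖ = α. Then it is not the case that all three residues of ⌊‖x‖²⌋, ⌊‖y‖²⌋, ⌊‖z‖²⌋ modulo 47 lie in {0, 5, 10, 15, 20}. (The coloring of ℝⁿ in which a point x is red exactly when ⌊‖x‖²⌋ mod 47 ∈ {0, 5, 10, 15, 20} contains no red α-progression of length 3 for such α.) -/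
lemma zmod_helper (s₁ s₂ s₃ : ZMod 47)
    (h₁ : s₁ = 0 ∨ s₁ = 5 ∨ s₁ = 10 ∨ s₁ = 15 ∨ s₁ = 20)
    (h₂ : s₂ = 0 ∨ s₂ = 5 ∨ s₂ = 10 ∨ s₂ = 15 ∨ s₂ = 20)
    (h₃ : s₃ = 0 ∨ s₃ = 5 ∨ s₃ = 10 ∨ s₃ = 15 ∨ s₃ = 20)
    (d : ℤ) (hd1 : 1 ≤ d) (hd4 : d ≤ 4)
    (h : s₁ + s₃ - 2 * s₂ = (d : ZMod 47)) : False := by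
  interval_cases d <;> push_cast at h <;> revert h <;>
    rcases h₁ with rfl | rfl | rfl | rfl | rfl <;>
    rcases h₂ with rfl | rfl | rfl | rfl | rfl <;>
    rcases h₃ with rfl | rfl | rfl | rfl | rfl <;> decide

/-- Let `47N + 1 ≤ α² ≤ 47N + 3/2` for some nonnegative integer `N`. If `x, y, z`
form an `α`-progression of length 3, then the residues of `⌊‖x‖²⌋, ⌊‖y‖²⌋, ⌊‖z‖²⌋`
modulo 47 cannot all lie in `{0, 5, 10, 15, 20}`. -/
theorem stmt_12 (n : ℕ) (x y z : EuclideanSpace ℝ (Fin n)) (α : ℝ) (N : ℕ)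
    (hlow : 47 * (N : ℝ) + 1 ≤ α ^ 2) (hhigh : α ^ 2 ≤ 47 * (N : ℝ) + 3 / 2)
    (hprog : x - (2 : ℝ) • y + z = 0)
    (hxy : ‖x - y‖ = α) (hyz : ‖y - z‖ = α) :
    ¬ (((⌊‖x‖ ^ 2⌋ : ℤ) : ZMod 47) ∈ ({0, 5, 10, 15, 20} : Set (ZMod 47)) ∧
       ((⌊‖y‖ ^ 2⌋ : ℤ) : ZMod 47) ∈ ({0, 5, 10, 15, 20} : Set (ZMod 47)) ∧
       ((⌊‖z‖ ^ 2⌋ : ℤ) : ZMod 47) ∈ ({0, 5, 10, 15, 20} : Set (ZMod 47))) := by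
  rintro ⟨h1, h2, h3⟩
  -- geometry: x = y + v, z = y - v with ‖v‖ = α
  have hz : z = y - (x - y) := by
    have h2 : z = (2 : ℝ) • y - x := by
      apply eq_of_sub_eq_zero
      rw [← hprog, two_smul]; abel
    rw [h2, two_smul]; abel
  obtain ⟨v, hxv, hzv, hv⟩ : ∃ v, x = y + v ∧ z = y - v ∧ ‖v‖ = α :=
    ⟨x - y, by abel, hz, hxy⟩
  have key : ‖x‖ ^ 2 + ‖z‖ ^ 2 = 2 * ‖y‖ ^ 2 + 2 * α ^ 2 := by
    rw [hxv, hzv, ← hv, norm_add_sq_real, norm_sub_sq_real]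
    ring
  -- floor arithmetic
  set a := ‖x‖ ^ 2 with ha
  set b := ‖y‖ ^ 2 with hb
  set c := ‖z‖ ^ 2 with hc
  set A := ⌊a⌋ with hA
  set B := ⌊b⌋ with hB
  set C := ⌊c⌋ with hC
  set d : ℤ := A + C - 2 * B - 94 * N with hd
  have hAa : (A : ℝ) ≤ a := Int.floor_le a
  have hBb : (B : ℝ) ≤ b := Int.floor_le b
  have hCc : (C : ℝ) ≤ c := Int.floor_le c
  have hAa' : a < A + 1 := Int.lt_floor_add_one a
  have hBb' : b < B + 1 := Int.lt_floor_add_one b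
  have hCc' : c < C + 1 := Int.lt_floor_add_one c
  have hd1 : 1 ≤ d := by
    have : (94 * N : ℝ) < (A + C - 2 * B : ℤ) := by
      push_cast
      nlinarith [hlow]
    have := Int.lt_iff_add_one_le.mp (by exact_mod_cast this)
    omega
  have hd4 : d ≤ 4 := by
    have : ((A + C - 2 * B : ℤ) : ℝ) < 94 * N + 5 := by
      push_cast
      nlinarith [hhigh]
    have : (A + C - 2 * B : ℤ) < 94 * N + 5 := by exact_mod_cast this
    omega
  -- pass to ZMod 47
  have hcast : ((A : ZMod 47)) + ((C : ZMod 47)) - 2 * ((B : ZMod 47)) = (d : ZMod 47) := by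
    have : (A + C - 2 * B : ℤ) = d + 94 * N := by omega
    have h47 : ((94 * N : ℤ) : ZMod 47) = 0 := by
      push_cast
      rw [show ((94 : ZMod 47)) = 0 from by decide]
      ring
    calc ((A : ZMod 47)) + ((C : ZMod 47)) - 2 * ((B : ZMod 47))
        = ((A + C - 2 * B : ℤ) : ZMod 47) := by push_cast; ring
      _ = ((d + 94 * N : ℤ) : ZMod 47) := by rw [← this]
      _ = (d : ZMod 47) := by push_cast at h47 ⊢; rw [h47]; ring
  simp only [Set.mem_insert_iff, Set.mem_singleton_iff] at h1 h2 h3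
  exact zmod_helper _ _ _ h1 h2 h3 d hd1 hd4 hcast
end

section
/- Let α be a positive real number such that α² is irrational. Then there exist positive integers p and q with p ≡ 1 (mod 47), q ≡ 1 (mod 47), and q < p/α² < q + 1/2. -/
/-!
With `ξ = 1/α²`, it suffices to find `n, m ≥ 0` with `47m + 1 < (47n + 1)ξ < 47m + 3/2`,
i.e. to put `nξ` into the window `((1 - ξ)/47, (1 - ξ)/47 + 1/94)` modulo `1`.
Since `ξ` is irrational, Dirichlet's approximation theorem gives `k > 0` for which
`u = kξ - round (kξ)` is nonzero and shorter than the window, and the natural multiples of `u`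
cannot jump over a window of that length.
-/

theorem exists_nat_mul_mem_Ioo_add_int_of_pos {u ε : ℝ} (hu : 0 < u) (huε : u < ε) (c : ℝ) :
    ∃ (K : ℕ) (m : ℤ), c + m < K * u ∧ K * u < c + m + ε := by
  refine ⟨⌊Int.fract c / u⌋₊ + 1, -⌊c⌋, ?_, ?_⟩ <;>
    rw [Int.cast_neg, ← sub_eq_add_neg, ← Int.fract]
  · exact (div_lt_iff₀ hu).1 (by exact_mod_cast Nat.lt_floor_add_one _)
  · have hfloor := (le_div_iff₀ hu).1 (Nat.floor_le (div_nonneg (Int.fract_nonneg c) hu.le))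
    push_cast
    linarith

theorem exists_nat_mul_mem_Ioo_add_int {u ε : ℝ} (hu : u ≠ 0) (huε : |u| < ε) (c : ℝ) :
    ∃ (K : ℕ) (m : ℤ), c + m < K * u ∧ K * u < c + m + ε := by
  rcases hu.lt_or_gt with hneg | hpos
  · -- reflect the window `(c, c + ε)` to `(-c - ε, -c)` and use the positive step `-u`
    obtain ⟨K, m, hlo, hhi⟩ :=
      exists_nat_mul_mem_Ioo_add_int_of_pos (neg_pos.2 hneg) (by rwa [← abs_of_neg hneg]) (-c - ε)
    refine ⟨K, -m, ?_, ?_⟩ <;> push_cast <;> linarith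
  · exact exists_nat_mul_mem_Ioo_add_int_of_pos hpos (by rwa [← abs_of_pos hpos]) c

theorem Irrational.exists_nat_mul_mem_Ioo_add_int {ξ : ℝ} (hξ : Irrational ξ) {ε : ℝ}
    (hε : 0 < ε) (c : ℝ) : ∃ (n : ℕ) (m : ℤ), c + m < n * ξ ∧ n * ξ < c + m + ε := by
  obtain ⟨N, hN⟩ := exists_nat_one_div_lt hε
  obtain ⟨k, hk, -, hkξ⟩ := Real.exists_nat_abs_mul_sub_round_le ξ N.succ_pos
  have hu : (k : ℝ) * ξ - round ((k : ℝ) * ξ) ≠ 0 :=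
    sub_ne_zero.2 ((hξ.natCast_mul hk.ne').ne_int _)
  have hsmall : |(k : ℝ) * ξ - round ((k : ℝ) * ξ)| < ε :=
    hkξ.trans_lt <| (one_div_le_one_div_of_le (by positivity) (by push_cast; linarith)).trans_lt hN
  obtain ⟨K, m, hlo, hhi⟩ := _root_.exists_nat_mul_mem_Ioo_add_int hu hsmall c
  refine ⟨K * k, m + K * round ((k : ℝ) * ξ), ?_, ?_⟩ <;> push_cast <;> linarith

theorem stmt_18_general (α : ℝ) (hirr : Irrational (α ^ 2)) :
    ∃ p q : ℕ, 0 < p ∧ 0 < q ∧ p % 47 = 1 ∧ q % 47 = 1 ∧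
      (q : ℝ) < (p : ℝ) / α ^ 2 ∧ (p : ℝ) / α ^ 2 < (q : ℝ) + 1 / 2 := by
  set ξ := (α ^ 2)⁻¹
  have hξ : 0 ≤ ξ := by positivity
  obtain ⟨n, m, hlo, hhi⟩ := hirr.inv.exists_nat_mul_mem_Ioo_add_int (ε := 1 / 94)
    (by norm_num) ((1 - ξ) / 47)
  have hm : 0 ≤ m := by
    by_contra! hm
    have : (m : ℝ) ≤ -1 := by exact_mod_cast Int.le_sub_one_of_lt hm
    linarith [mul_nonneg n.cast_nonneg hξ]
  lift m to ℕ using hm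
  refine ⟨47 * n + 1, 47 * m + 1, by omega, by omega, by omega, by omega, ?_, ?_⟩ <;>
    rw [div_eq_mul_inv] <;> push_cast at hlo hhi ⊢ <;> linarith

/-- If `α > 0` and `α²` is irrational, then there are positive integers `p, q`,
both congruent to 1 modulo 47, with `q < p/α² < q + 1/2`. -/
theorem stmt_18 (α : ℝ) (hα : 0 < α) (hirr : Irrational (α ^ 2)) :
    ∃ p q : ℕ, 0 < p ∧ 0 < q ∧ p % 47 = 1 ∧ q % 47 = 1 ∧
      (q : ℝ) < (p : ℝ) / α ^ 2 ∧ (p : ℝ) / α ^ 2 < (q : ℝ) + 1 / 2 :=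
  stmt_18_general α hirr
end
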